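/- Let φ and ψ be Drinfeld-Stuhler O_D-modules over an A-field L of generic A-characteristic (i.e. γ : A → L is injective). Then: (1) the map ∂ : Hom_L(φ, ψ) → M_d(L) is injective; (2) End_L(φ) is a commutative ring, identified by ∂ with an A-subalgebra of L (embedded as scalar matrices). -/

import Mathlib

noncomputable section

open scoped TensorProduct

namespace DS

/-! ### Skew polynomial rings -/

section SkewPoly

variable {R : Type*} [Ring R]

/-- The skew polynomial ring `R[τ; σ]`: finitely supported sequences of coefficients,
with multiplication twisted by the ring endomorphism `σ`, so that `τ b = σ(b) τ`. -/
def SkewPoly (R : Type*) [Ring R] (_σ : R →+* R) : Type _ := ℕ →₀ R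

namespace SkewPoly

variable {σ : R →+* R}

instance : AddCommGroup (SkewPoly R σ) := inferInstanceAs (AddCommGroup (ℕ →₀ R))

instance {S : Type*} [Semiring S] [Module S R] : Module S (SkewPoly R σ) :=
  inferInstanceAs (Module S (ℕ →₀ R))

/-- The underlying finitely supported function of coefficients. -/
def toFinsupp (f : SkewPoly R σ) : ℕ →₀ R := f

/-- The `n`-th coefficient of a skew polynomial. -/
def coeff (f : SkewPoly R σ) (n : ℕ) : R := toFinsupp f n

/-- The skew polynomial `a·τ^n`. -/
def single (σ : R →+* R) (n : ℕ) (a : R) : SkewPoly R σ := Finsupp.single n a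

private def mulAux (σ : R →+* R) (f g : ℕ →₀ R) : ℕ →₀ R :=
  f.sum fun i a => g.sum fun j b => Finsupp.single (i + j) (a * (⇑σ)^[i] b)

private lemma mulAux_zero (σ : R →+* R) (f : ℕ →₀ R) : mulAux σ f 0 = 0 := by
  simp [mulAux]

private lemma zero_mulAux (σ : R →+* R) (f : ℕ →₀ R) : mulAux σ 0 f = 0 := by
  simp [mulAux]

private lemma mulAux_add (σ : R →+* R) (f g h : ℕ →₀ R) :
    mulAux σ f (g + h) = mulAux σ f g + mulAux σ f h := by
  unfold mulAux
  rw [← Finsupp.sum_add]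
  refine Finsupp.sum_congr fun i _ => ?_
  rw [Finsupp.sum_add_index]
  · intro j _
    simp
  · intro j _ b₁ b₂
    simp [mul_add, Finsupp.single_add]

private lemma add_mulAux (σ : R →+* R) (f g h : ℕ →₀ R) :
    mulAux σ (f + g) h = mulAux σ f h + mulAux σ g h := by
  unfold mulAux
  rw [Finsupp.sum_add_index]
  · intro i _
    simp
  · intro i _ a₁ a₂
    rw [← Finsupp.sum_add]
    refine Finsupp.sum_congr fun j _ => ?_
    simp [add_mul, Finsupp.single_add]

private lemma single_mulAux_single (σ : R →+* R) (i j : ℕ) (a b : R) :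
    mulAux σ (Finsupp.single i a) (Finsupp.single j b)
      = Finsupp.single (i + j) (a * (⇑σ)^[i] b) := by
  unfold mulAux
  rw [Finsupp.sum_single_index, Finsupp.sum_single_index]
  · simp
  · rw [Finsupp.sum_single_index] <;> simp

private lemma mulAux_assoc (σ : R →+* R) (f g h : ℕ →₀ R) :
    mulAux σ (mulAux σ f g) h = mulAux σ f (mulAux σ g h) := by
  induction f using Finsupp.induction_linear with
  | zero => simp [zero_mulAux]
  | add f₁ f₂ hf₁ hf₂ => simp [add_mulAux, hf₁, hf₂]
  | single i a =>
    induction g using Finsupp.induction_linear with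
    | zero => simp [zero_mulAux, mulAux_zero]
    | add g₁ g₂ hg₁ hg₂ => simp [add_mulAux, mulAux_add, hg₁, hg₂]
    | single j b =>
      induction h using Finsupp.induction_linear with
      | zero => simp [mulAux_zero]
      | add h₁ h₂ hh₁ hh₂ => simp [mulAux_add, hh₁, hh₂]
      | single k c =>
        rw [single_mulAux_single, single_mulAux_single, single_mulAux_single,
          single_mulAux_single]
        rw [add_assoc, mul_assoc]
        congr 2
        rw [Function.iterate_add_apply]
        rw [iterate_map_mul]

instance instRing : Ring (SkewPoly R σ) :=
  { (inferInstance : AddCommGroup (SkewPoly R σ)) with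
    mul := fun f g => (mulAux σ (toFinsupp f) (toFinsupp g) : SkewPoly R σ)
    one := (Finsupp.single 0 1 : ℕ →₀ R)
    mul_assoc := fun f g h => mulAux_assoc σ f g h
    one_mul := fun f => by
      show mulAux σ (Finsupp.single 0 1) f = f
      unfold mulAux
      rw [Finsupp.sum_single_index]
      · simp
        exact Finsupp.sum_single (f : ℕ →₀ R)
      · simp
        exact Finset.sum_const_zero
    mul_one := fun f => by
      show mulAux σ f (Finsupp.single 0 1) = f
      unfold mulAux
      refine Eq.trans (Finsupp.sum_congr fun i _ => ?_) (Finsupp.sum_single _)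
      rw [Finsupp.sum_single_index] <;> simp
    left_distrib := fun f g h => mulAux_add σ f g h
    right_distrib := fun f g h => add_mulAux σ f g h
    zero_mul := fun f => zero_mulAux σ f
    mul_zero := fun f => mulAux_zero σ f }

lemma mul_def (f g : SkewPoly R σ) :
    f * g = (mulAux σ (toFinsupp f) (toFinsupp g) : SkewPoly R σ) := rfl

/-- Push a skew polynomial along a map of coefficient rings (applied coefficientwise). -/
def mapCoeffs {R' : Type*} [Ring R'] {σ' : R' →+* R'} (g : R →+* R') (f : SkewPoly R σ) :
    SkewPoly R' σ' := Finsupp.mapRange g g.map_zero (toFinsupp f)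

end SkewPoly

end SkewPoly



section Setup

variable (p e d : ℕ) [Fact p.Prime]

/-- The `q = p^e`-power Frobenius, applied entrywise to `d × d` matrices. -/
def matFrob (L : Type*) [Field L] [CharP L p] :
    Matrix (Fin d) (Fin d) L →+* Matrix (Fin d) (Fin d) L :=
  (iterateFrobenius L p e).mapMatrix

/-- The ring `M_d(L[τ])` of `d × d` matrices over the skew polynomial ring `L[τ]`
(realized as skew polynomials with matrix coefficients). -/
abbrev MdTau (L : Type*) [Field L] [CharP L p] :=
  SkewPoly (Matrix (Fin d) (Fin d) L) (matFrob p e d L)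

variable {p e d}

/-- The coordinates of the additive polynomial map `𝔾_a^d → 𝔾_a^d` defined by
`S ∈ M_d(L[τ])`. -/
def kerPolys {L : Type*} [Field L] [CharP L p] (S : MdTau p e d L) :
    Fin d → MvPolynomial (Fin d) L := fun j =>
  (SkewPoly.toFinsupp S).sum fun i B =>
    ∑ k : Fin d, MvPolynomial.C (B j k) * MvPolynomial.X k ^ (p ^ e) ^ i

/-- The ideal of the scheme-theoretic kernel of `S : 𝔾_a^d → 𝔾_a^d`. -/
def kerIdeal {L : Type*} [Field L] [CharP L p] (S : MdTau p e d L) :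
    Ideal (MvPolynomial (Fin d) L) :=
  Ideal.span (Set.range (kerPolys S))

/-- `S : 𝔾_a^d → 𝔾_a^d` has kernel a finite group scheme, i.e. the coordinate ring of its
scheme-theoretic kernel is a finite-dimensional vector space. -/
def HasFiniteKernel {L : Type*} [Field L] [CharP L p] (S : MdTau p e d L) : Prop :=
  Module.Finite L (MvPolynomial (Fin d) L ⧸ kerIdeal S)

/-- The order of the scheme-theoretic kernel of `S`, namely the dimension over `L` of the
coordinate ring of the kernel. -/
def kernelOrder {L : Type*} [Field L] [CharP L p] (S : MdTau p e d L) : ℕ :=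
  Module.finrank L (MvPolynomial (Fin d) L ⧸ kerIdeal S)

/-- Evaluation of `S ∈ M_d(L[τ])` on points of `𝔾_a^d` with values in an `L`-algebra `Ω`. -/
def actOn {L : Type*} [Field L] [CharP L p] (S : MdTau p e d L) (Ω : Type*) [CommRing Ω]
    [Algebra L Ω] (v : Fin d → Ω) : Fin d → Ω := fun j =>
  (SkewPoly.toFinsupp S).sum fun i B =>
    ∑ k : Fin d, algebraMap L Ω (B j k) * v k ^ (p ^ e) ^ i

end Setup

section Orders

variable (A : Type*) [CommRing A] (D : Type*) [Ring D] [Algebra A D]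

/-- An `A`-order in the `A`-algebra (typically, the `F`-division algebra) `D`: an `A`-subalgebra
which is finitely generated as an `A`-module and contains a common-denominator multiple of every
element of `D`. -/
def IsOrder (O : Subalgebra A D) : Prop :=
  (Subalgebra.toSubmodule O).FG ∧
    ∀ x : D, ∃ (s : A) (y : O), s ≠ 0 ∧ algebraMap A D s * x = (y : D)

/-- A maximal `A`-order in `D`. -/
def IsMaximalOrder (O : Subalgebra A D) : Prop :=
  IsOrder A D O ∧ ∀ O' : Subalgebra A D, IsOrder A D O' → O ≤ O' → O' = O

end Orders

section DrinfeldStuhler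

variable {p e d : ℕ} [Fact p.Prime]
variable {A : Type*} [CommRing A] {D : Type*} [Ring D] [Algebra A D]

/-- A Drinfeld–Stuhler `O_D`-module structure over the `A`-field `(L, γ)`:
an embedding `φ : O_D → M_d(L[τ])` such that for every nonzero `b ∈ O_D` the kernel of `φ_b` is
a finite group scheme over `L` of order `#(O_D/O_D·b)`, and such that the action of `A` on the
tangent space `Lie(𝔾_a^d)` is via `γ`. -/
structure IsDrinfeldStuhler (OD : Subalgebra A D) {L : Type*} [Field L] [CharP L p]
    (γ : A →+* L) (φ : OD →+* MdTau p e d L) : Prop where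
  inj : Function.Injective φ
  ker_fin : ∀ b : OD, b ≠ 0 → HasFiniteKernel (φ b)
  ker_order : ∀ b : OD, b ≠ 0 →
    kernelOrder (φ b) = Nat.card (OD ⧸ (Ideal.span {b} : Ideal OD))
  lie : ∀ a : A,
    SkewPoly.coeff (φ (algebraMap A OD a)) 0 = γ a • (1 : Matrix (Fin d) (Fin d) L)

end DrinfeldStuhler

section Splitting

variable {A : Type*} [CommRing A] [IsDomain A] [IsDedekindDomain A]
variable (F : Type*) [Field F] [Algebra A F] [IsFractionRing A F]
variable (D : Type*) [Ring D] [Algebra F D]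
variable (d : ℕ)

open IsDedekindDomain

/-- The division algebra `D` splits at the finite place `v` of `F`, i.e. `D ⊗_F F_v` is a matrix
algebra over the completion `F_v`. -/
def SplitsAt (v : HeightOneSpectrum A) : Prop :=
  letI : SMulCommClass F (v.adicCompletion F) (v.adicCompletion F) :=
    Algebra.to_smulCommClass
  letI : Algebra (v.adicCompletion F) ((v.adicCompletion F) ⊗[F] D) :=
    Algebra.TensorProduct.leftAlgebra
  Nonempty (((v.adicCompletion F) ⊗[F] D) ≃ₐ[v.adicCompletion F]
    Matrix (Fin d) (Fin d) (v.adicCompletion F))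

/-- The `A`-characteristic `ker γ` of the `A`-field `(L, γ)` does not divide `𝔯(D)`:
it is either zero (generic characteristic) or a prime at which `D` is split. -/
def CharNotDividesRam {L : Type*} [Field L] (γ : A →+* L) : Prop :=
  RingHom.ker γ = ⊥ ∨
    ∃ v : HeightOneSpectrum A, RingHom.ker γ = v.asIdeal ∧ SplitsAt F D d v

end Splitting


section Morphisms

variable {p e d : ℕ} [Fact p.Prime]
variable {A : Type*} [CommRing A] {D : Type*} [Ring D] [Algebra A D]
variable {OD : Subalgebra A D}
variable {L : Type*} [Field L] [CharP L p]

/-- A morphism `u : φ → ψ` of Drinfeld–Stuhler modules over `L`: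
an element `u ∈ M_d(L[τ])` with `u φ_b = ψ_b u` for all `b ∈ O_D`. -/
def IsMorphism (φ ψ : OD →+* MdTau p e d L) (u : MdTau p e d L) : Prop :=
  ∀ b : OD, u * φ b = ψ b * u

/-- `φ` and `ψ` are isomorphic Drinfeld–Stuhler modules over `L`. -/
def IsIsomorphic (φ ψ : OD →+* MdTau p e d L) : Prop :=
  ∃ u : (MdTau p e d L)ˣ, ∀ b : OD, (u : MdTau p e d L) * φ b = ψ b * (u : MdTau p e d L)

/-- The endomorphism ring `End_L(φ)`: the centralizer of `φ(O_D)` in `M_d(L[τ])`. -/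
def EndRing (φ : OD →+* MdTau p e d L) : Subring (MdTau p e d L) :=
  Subring.centralizer (Set.range fun b : OD => φ b)

lemma mem_endRing_iff {φ : OD →+* MdTau p e d L} {x : MdTau p e d L} :
    x ∈ EndRing φ ↔ ∀ b : OD, φ b * x = x * φ b := by
  unfold EndRing
  rw [Subring.mem_centralizer_iff]
  constructor
  · intro h b
    exact h _ ⟨b, rfl⟩
  · rintro h g ⟨b, rfl⟩
    exact h b

/-- The `A`-algebra structure map of `End_L(φ)`, `a ↦ φ_a`. -/
def endScalars (φ : OD →+* MdTau p e d L) : A →+* EndRing φ where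
  toFun a := ⟨φ (algebraMap A OD a), mem_endRing_iff.mpr fun b => by
    rw [← map_mul, ← map_mul, Algebra.commutes]⟩
  map_one' := by
    ext
    simp
  map_mul' a b := by
    ext
    simp [map_mul]
  map_zero' := by
    ext
    simp
  map_add' a b := by
    ext
    simp [map_add]

/-- `End_L(φ)` as an `A`-algebra. -/
def endAlgebra (φ : OD →+* MdTau p e d L) : Algebra A (EndRing φ) :=
  RingHom.toAlgebra' (endScalars φ) (by
    intro a x
    apply Subtype.ext
    rw [MulMemClass.coe_mul, MulMemClass.coe_mul]
    exact mem_endRing_iff.mp x.2 (algebraMap A OD a))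

end Morphisms

section Places

/-- `K/F` is an imaginary extension relative to the distinguished place `∞` of `F` (given by its
valuation subring): there is exactly one place of `K` lying above `∞`. -/
def IsImaginary {F : Type*} [Field F] (vinf : ValuationSubring F)
    (K : Type*) [Field K] [Algebra F K] : Prop :=
  ∃! w : ValuationSubring K, w.comap (algebraMap F K) = vinf

end Places

section MapCoeffsHom

variable {R R' : Type*} [Ring R] [Ring R'] {σ : R →+* R} {σ' : R' →+* R'}

namespace SkewPoly

private lemma iterate_compat (g : R →+* R') (hg : ∀ x, g (σ x) = σ' (g x)) :
    ∀ (i : ℕ) (b : R), g ((⇑σ)^[i] b) = (⇑σ')^[i] (g b) := by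
  intro i
  induction i with
  | zero => intro b; simp
  | succ i ih =>
    intro b
    rw [Function.iterate_succ_apply', Function.iterate_succ_apply', hg, ih]

private lemma mapRange_mulAux (g : R →+* R') (hg : ∀ x, g (σ x) = σ' (g x)) (f h : ℕ →₀ R) :
    Finsupp.mapRange g g.map_zero (mulAux σ f h) =
      mulAux σ' (Finsupp.mapRange g g.map_zero f) (Finsupp.mapRange g g.map_zero h) := by
  induction f using Finsupp.induction_linear with
  | zero => simp [zero_mulAux]
  | add f₁ f₂ h₁ h₂ =>
    rw [add_mulAux, Finsupp.mapRange_add g.map_add, Finsupp.mapRange_add g.map_add, add_mulAux,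
      h₁, h₂]
  | single i a =>
    induction h using Finsupp.induction_linear with
    | zero => simp [mulAux_zero]
    | add h₁ h₂ hh₁ hh₂ =>
      rw [mulAux_add, Finsupp.mapRange_add g.map_add, Finsupp.mapRange_add g.map_add, mulAux_add,
        hh₁, hh₂]
    | single j b =>
      rw [single_mulAux_single, Finsupp.mapRange_single, Finsupp.mapRange_single,
        Finsupp.mapRange_single, single_mulAux_single, map_mul, iterate_compat g hg]

/-- `mapCoeffs` as a ring homomorphism, given compatibility of the coefficient map with
the twists. -/
def mapCoeffsHom (g : R →+* R') (hg : ∀ x, g (σ x) = σ' (g x)) :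
    SkewPoly R σ →+* SkewPoly R' σ' where
  toFun := mapCoeffs g
  map_one' := by
    show Finsupp.mapRange g g.map_zero (Finsupp.single 0 1) = Finsupp.single 0 1
    rw [Finsupp.mapRange_single, map_one]
  map_mul' f h := mapRange_mulAux g hg f h
  map_zero' := by
    show Finsupp.mapRange g g.map_zero 0 = 0
    exact Finsupp.mapRange_zero
  map_add' f h := by
    show Finsupp.mapRange g g.map_zero (f + h) = _
    exact Finsupp.mapRange_add g.map_add f h

@[simp] lemma mapCoeffsHom_apply (g : R →+* R') (hg : ∀ x, g (σ x) = σ' (g x))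
    (f : SkewPoly R σ) : mapCoeffsHom g hg f = mapCoeffs g f := rfl

end SkewPoly

end MapCoeffsHom

section BaseChange

variable {p e d : ℕ} [Fact p.Prime]

lemma matFrob_compat {L L' : Type*} [Field L] [CharP L p] [Field L'] [CharP L' p]
    (g : L →+* L') (M : Matrix (Fin d) (Fin d) L) :
    g.mapMatrix (matFrob p e d L M) = matFrob p e d L' (g.mapMatrix M) := by
  ext i j
  simp only [matFrob, RingHom.mapMatrix_apply, Matrix.map_apply, iterateFrobenius_def, map_pow]

/-- Base change of `M_d(L[τ])` along a field embedding `L → L'`. -/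
def baseChangeHom {L L' : Type*} [Field L] [CharP L p] [Field L'] [CharP L' p]
    (g : L →+* L') : MdTau p e d L →+* MdTau p e d L' :=
  SkewPoly.mapCoeffsHom g.mapMatrix (matFrob_compat g)

end BaseChange

section EndF

variable {p e d : ℕ} [Fact p.Prime]
variable {A : Type*} [CommRing A] {D : Type*} [Ring D] [Algebra A D]
variable {OD : Subalgebra A D} {L : Type*} [Field L] [CharP L p]
variable (F : Type*) [Field F] [Algebra A F]

/-- The `F`-algebra `End_L(φ) ⊗_A F`. -/
def EndF (φ : OD →+* MdTau p e d L) : Type _ :=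
  letI : Algebra A (EndRing φ) := endAlgebra φ
  F ⊗[A] ↥(EndRing φ)

noncomputable instance (φ : OD →+* MdTau p e d L) : Ring (EndF F φ) :=
  letI : Algebra A (EndRing φ) := endAlgebra φ
  (inferInstance : Ring (F ⊗[A] ↥(EndRing φ)))

noncomputable instance (φ : OD →+* MdTau p e d L) : Algebra F (EndF F φ) :=
  letI : Algebra A (EndRing φ) := endAlgebra φ
  (inferInstance : Algebra F (F ⊗[A] ↥(EndRing φ)))

/-- The canonical map `End_L(φ) → End_L(φ) ⊗_A F`. -/
noncomputable def endIncl (φ : OD →+* MdTau p e d L) : ↥(EndRing φ) →+* EndF F φ :=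
  letI : Algebra A (EndRing φ) := endAlgebra φ
  (Algebra.TensorProduct.includeRight (R := A) (A := F) (B := ↥(EndRing φ))).toRingHom

end EndF

section AdicBaseChange

open IsDedekindDomain

variable (Atil : Type*) [CommRing Atil] [IsDomain Atil] [IsDedekindDomain Atil]
variable (Ftil : Type*) [Field Ftil] [Algebra Atil Ftil] [IsFractionRing Atil Ftil]
variable (E : Type*) [Ring E] [Algebra Ftil E]
variable (Q : HeightOneSpectrum Atil)

/-- The base change `E ⊗_{F̃} F̃_Q` of an `F̃`-algebra `E` to the completion of `F̃` at the
finite place `Q`. -/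
def AdicBC : Type _ := (Q.adicCompletion Ftil) ⊗[Ftil] E

noncomputable instance : Ring (AdicBC Atil Ftil E Q) :=
  inferInstanceAs (Ring ((Q.adicCompletion Ftil) ⊗[Ftil] E))

noncomputable instance : Algebra (Q.adicCompletion Ftil) (AdicBC Atil Ftil E Q) :=
  letI : SMulCommClass Ftil (Q.adicCompletion Ftil) (Q.adicCompletion Ftil) :=
    Algebra.to_smulCommClass
  inferInstanceAs
    (Algebra (Q.adicCompletion Ftil) ((Q.adicCompletion Ftil) ⊗[Ftil] E))

end AdicBaseChange

/-!
Let `u : φ → ψ` be nonzero with `∂u = 0`, and let `U τ^n` (`n > 0`) be its lowest-degree term.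
Comparing `τ^n`-coefficients in `u φ_a = ψ_a u` gives `γ(a)^(q^n) U = γ(a) U`, so every `γ(a)`
is a root of `X^(q^n) - X`; this is impossible since `γ` embeds the infinite ring `A` into `L`.
Hence `∂` is injective on `Hom_L(φ, ψ)`.

For an endomorphism `u`, `∂u` commutes with `∂φ(O_D)`. As `D = F · O_D`, the map `∂ ∘ φ` extends to
an `F`-algebra map `D → M_d(L)`, and then to `L ⊗_F D → M_d(L)`, which is injective because `D` is
central simple, hence bijective by counting dimensions. So `∂u` is central in `M_d(L)`, i.e. a
scalar. Finally `uv` and `vu` are endomorphisms with the same scalar `∂`, so `uv = vu`.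
-/

namespace SkewPoly

open Finset.HasAntidiagonal

variable {R : Type*} [Ring R] {σ : R →+* R}

@[elab_as_elim]
lemma induction_linear {P : SkewPoly R σ → Prop} (f : SkewPoly R σ) (zero : P 0)
    (add : ∀ f g, P f → P g → P (f + g)) (single : ∀ n a, P (single σ n a)) : P f :=
  Finsupp.induction_linear (motive := P) f zero add single

lemma coeff_zero (n : ℕ) : coeff (0 : SkewPoly R σ) n = 0 := rfl

lemma coeff_add (f g : SkewPoly R σ) (n : ℕ) : coeff (f + g) n = coeff f n + coeff g n := rfl

lemma coeff_single (m n : ℕ) (a : R) :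
    coeff (single σ m a) n = if m = n then a else 0 :=
  Finsupp.single_apply

lemma single_mul_single (i j : ℕ) (a b : R) :
    single σ i a * single σ j b = single σ (i + j) (a * (⇑σ)^[i] b) :=
  single_mulAux_single σ i j a b

lemma coeff_mul (f g : SkewPoly R σ) (n : ℕ) :
    coeff (f * g) n = ∑ x ∈ antidiagonal n, coeff f x.1 * (⇑σ)^[x.1] (coeff g x.2) := by
  induction f using induction_linear with
  | zero => simp [coeff_zero]
  | add f₁ f₂ h₁ h₂ => simp only [add_mul, coeff_add, h₁, h₂, Finset.sum_add_distrib]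
  | single i a =>
    induction g using induction_linear with
    | zero => simp [coeff_zero]
    | add g₁ g₂ h₁ h₂ =>
      simp only [mul_add, coeff_add, h₁, h₂, iterate_map_add, Finset.sum_add_distrib]
    | single j b =>
      have hterm : ∀ x : ℕ × ℕ, coeff (single σ i a) x.1 * (⇑σ)^[x.1] (coeff (single σ j b) x.2)
          = if (i, j) = x then a * (⇑σ)^[i] b else 0 := by
        rintro ⟨k, l⟩
        simp only [coeff_single, Prod.mk.injEq]
        split_ifs <;> simp_all
      rw [single_mul_single, coeff_single, Finset.sum_congr rfl fun x _ => hterm x,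
        Finset.sum_ite_eq]
      simp only [mem_antidiagonal]

lemma coeff_mul_of_forall_lt_left {f : SkewPoly R σ} {n : ℕ} (hf : ∀ i < n, coeff f i = 0)
    (g : SkewPoly R σ) : coeff (f * g) n = coeff f n * (⇑σ)^[n] (coeff g 0) := by
  rw [coeff_mul, Finset.sum_eq_single_of_mem (n, 0) (by simp)]
  rintro ⟨i, j⟩ hij hne
  rw [hf i (by grind [mem_antidiagonal]), zero_mul]

lemma coeff_mul_of_forall_lt_right (f : SkewPoly R σ) {g : SkewPoly R σ} {n : ℕ}
    (hg : ∀ j < n, coeff g j = 0) : coeff (f * g) n = coeff f 0 * coeff g n := by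
  rw [coeff_mul, Finset.sum_eq_single_of_mem (0, n) (by simp)]
  · simp
  rintro ⟨i, j⟩ hij hne
  rw [hg j (by grind [mem_antidiagonal]), iterate_map_zero, mul_zero]

/-- `∂ : R[τ; σ] → R`. -/
def constantCoeff : SkewPoly R σ →+* R where
  toFun f := coeff f 0
  map_one' := Finsupp.single_eq_same
  map_mul' f g := by simp [coeff_mul]
  map_zero' := rfl
  map_add' _ _ := rfl

lemma exists_coeff_ne_zero_forall_lt {f : SkewPoly R σ} (hf : f ≠ 0) :
    ∃ n, coeff f n ≠ 0 ∧ ∀ i < n, coeff f i = 0 := by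
  classical
  have h : ∃ n, coeff f n ≠ 0 := DFunLike.ne_iff.mp (show toFinsupp f ≠ 0 from hf)
  exact ⟨Nat.find h, Nat.find_spec h, fun i hi => not_not.mp (Nat.find_min h hi)⟩

end SkewPoly

end DS

lemma exists_pow_ne_self_of_injective {A K : Type*} [Infinite A] [Field K] {γ : A → K}
    (hγ : Function.Injective γ) {k : ℕ} (hk : 1 < k) : ∃ a, γ a ^ k ≠ γ a := by
  by_contra! h
  have hroots := Polynomial.finite_setOfPred_isRoot (FiniteField.X_pow_card_sub_X_ne_zero K hk)
  exact Set.infinite_univ ((hroots.preimage hγ.injOn).subset fun a _ => by simp [h a])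

lemma infinite_of_isFractionRing (A F : Type*) [CommRing A] [Field F] [Algebra A F]
    [IsFractionRing A F] [Infinite F] : Infinite A := by
  refine not_finite_iff_infinite.mp fun _ => ?_
  have : Finite F := Finite.of_surjective
    (fun q : A × A => algebraMap A F q.1 / algebraMap A F q.2) fun z => by
      obtain ⟨a, b, -, h⟩ := IsFractionRing.div_surjective (A := A) z
      exact ⟨(a, b), h⟩
  exact not_finite F

section CentralSimple

open TensorProduct

variable {F K D : Type*} [Field F] [Field K] [Algebra F K] [Ring D] [Algebra F D]
  {ι : Type*} [DecidableEq ι] (b : Module.Basis ι F K)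

lemma TensorProduct.equivFinsuppOfBasisLeft_symm_mul_tmul_one (c : ι →₀ D) (z : D) :
    (equivFinsuppOfBasisLeft b).symm c * (1 ⊗ₜ z) =
      (equivFinsuppOfBasisLeft b).symm (c.mapRange (· * z) (zero_mul z)) := by
  simp [Finsupp.sum_mapRange_index, Finsupp.sum_mul, Algebra.TensorProduct.tmul_mul_tmul]

lemma TensorProduct.tmul_one_mul_equivFinsuppOfBasisLeft_symm (c : ι →₀ D) (z : D) :
    (1 ⊗ₜ z) * (equivFinsuppOfBasisLeft b).symm c =
      (equivFinsuppOfBasisLeft b).symm (c.mapRange (z * ·) (mul_zero z)) := by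
  simp [Finsupp.sum_mapRange_index, Finsupp.mul_sum, Algebra.TensorProduct.tmul_mul_tmul]

lemma TensorProduct.exists_equivFinsuppOfBasisLeft_symm_eq_tmul_one [Algebra.IsCentral F D]
    (c : ι →₀ D) (hc : ∀ i, c i ∈ Subalgebra.center F D) :
    ∃ k : K, (equivFinsuppOfBasisLeft b).symm c = k ⊗ₜ 1 := by
  choose r hr using fun i => Algebra.mem_bot.mp (Algebra.IsCentral.out (hc i))
  refine ⟨∑ i ∈ c.support, r i • b i, ?_⟩
  rw [equivFinsuppOfBasisLeft_symm_apply, Finsupp.sum, sum_tmul]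
  refine Finset.sum_congr rfl fun i _ => ?_
  rw [← hr i, Algebra.algebraMap_eq_smul_one, tmul_smul, smul_tmul']

end CentralSimple

open TensorProduct in
/-- The minimal-support argument: a nonzero kernel element with fewest coordinates can be
normalised to have a coordinate `1`; its commutators with `1 ⊗ z` have fewer coordinates, hence
vanish, so all its coordinates are central, i.e. scalars, and it lies in `K ⊗ 1`. -/
theorem Algebra.IsCentral.tensorProduct_algHom_injective {F K D M : Type*} [Field F] [Field K]
    [Algebra F K] [DivisionRing D] [Algebra F D] [Algebra.IsCentral F D] [Ring M] [Nontrivial M]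
    [Algebra K M] (g : K ⊗[F] D →ₐ[K] M) : Function.Injective g := by
  classical
  let b := Module.Basis.ofVectorSpace F K
  let e := equivFinsuppOfBasisLeft (N := D) b
  suffices h : ∀ n (c : _ →₀ D), c.support.card = n → g (e.symm c) = 0 → c = 0 by
    refine (injective_iff_map_eq_zero g).mpr fun t ht => ?_
    simpa using congrArg e.symm (h _ (e t) rfl (by simpa using ht))
  intro n
  induction n using Nat.strong_induction_on with
  | _ n ih =>
  rintro c rfl hc
  by_contra hne
  obtain ⟨i₁, hi₁⟩ := Finsupp.support_nonempty_iff.mpr hne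
  set c' := c.mapRange (· * (c i₁)⁻¹) (zero_mul _)
  have hgc' : g (e.symm c') = 0 := by
    rw [← equivFinsuppOfBasisLeft_symm_mul_tmul_one, map_mul, hc, zero_mul]
  have hc'i₁ : c' i₁ = 1 := mul_inv_cancel₀ (Finsupp.mem_support_iff.mp hi₁)
  have hc'supp : c'.support ⊆ c.support := Finsupp.support_mapRange
  clear_value c'
  have hcentral : ∀ i, c' i ∈ Subalgebra.center F D := by
    intro i
    refine Subalgebra.mem_center_iff.mpr fun z => ?_
    set v := c'.mapRange (z * ·) (mul_zero z) - c'.mapRange (· * z) (zero_mul z)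
    have hgv : g (e.symm v) = 0 := by
      rw [map_sub, ← tmul_one_mul_equivFinsuppOfBasisLeft_symm,
        ← equivFinsuppOfBasisLeft_symm_mul_tmul_one, map_sub, map_mul, map_mul, hgc', mul_zero,
        zero_mul, sub_zero]
    have hsupp : v.support ⊆ c.support.erase i₁ := by
      refine subset_trans (fun j hj => ?_) (Finset.erase_subset_erase i₁ hc'supp)
      rw [Finsupp.mem_support_iff] at hj
      refine Finset.mem_erase.mpr ⟨fun h => hj ?_, Finsupp.mem_support_iff.mpr fun h => hj ?_⟩
      · simp [v, h, hc'i₁]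
      · simp [v, h]
    have hv := ih _ ((Finset.card_le_card hsupp).trans_lt (Finset.card_erase_lt_of_mem hi₁)) v
      rfl hgv
    simpa [v, sub_eq_zero] using DFunLike.congr_fun hv i
  obtain ⟨k, hk⟩ := exists_equivFinsuppOfBasisLeft_symm_eq_tmul_one b c' hcentral
  have hk0 : k = 0 := by
    rw [hk, ← Algebra.algebraMap_self_apply k, ← Algebra.TensorProduct.algebraMap_apply,
      AlgHom.commutes] at hgc'
    exact (algebraMap K M).injective (by rw [hgc', map_zero])
  have hc'0 : c' = 0 := e.symm.injective (by rw [hk, hk0, zero_tmul, map_zero])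
  simp [hc'0] at hc'i₁

theorem Matrix.exists_eq_smul_one_of_forall_commute {F K D n : Type*} [Field F] [Field K]
    [Algebra F K] [DivisionRing D] [Algebra F D] [Algebra.IsCentral F D] [Fintype n]
    [DecidableEq n] (hdim : Module.finrank F D = Fintype.card n ^ 2) (f : D →ₐ[F] Matrix n n K)
    {M : Matrix n n K} (hM : ∀ x, Commute M (f x)) : ∃ c : K, M = c • 1 := by
  rcases isEmpty_or_nonempty n with hn | hn
  · exact ⟨0, Subsingleton.elim _ _⟩
  have : FiniteDimensional F D := Module.finite_of_finrank_pos (by rw [hdim]; positivity)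
  let g : K ⊗[F] D →ₐ[K] Matrix n n K :=
    Algebra.TensorProduct.lift (Algebra.ofId K _) f fun k x =>
      Algebra.commute_algebraMap_left k (f x)
  have hg_inj : Function.Injective g := Algebra.IsCentral.tensorProduct_algHom_injective g
  have hg_surj : Function.Surjective g := by
    refine (LinearMap.injective_iff_surjective_of_finrank_eq_finrank ?_).mp
      (show Function.Injective g.toLinearMap from hg_inj)
    rw [Module.finrank_baseChange, hdim, Module.finrank_matrix, Module.finrank_self, sq, mul_one]
  have hcenter : M ∈ Subalgebra.center K (Matrix n n K) := by
    refine Subalgebra.mem_center_iff.mpr fun N => ?_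
    obtain ⟨t, rfl⟩ := hg_surj N
    induction t using TensorProduct.induction_on with
    | zero => simp
    | tmul k x =>
      rw [show g (k ⊗ₜ x) = algebraMap K _ k * f x from Algebra.TensorProduct.lift_tmul ..]
      exact (Algebra.commute_algebraMap_left k M).mul_left (hM x).symm
    | add t₁ t₂ h₁ h₂ => rw [map_add, add_mul, mul_add, h₁, h₂]
  obtain ⟨c, hc⟩ := Algebra.mem_bot.mp (Algebra.IsCentral.out hcenter)
  exact ⟨c, by rw [← hc, Algebra.algebraMap_eq_smul_one]⟩

section Orders

variable {A : Type*} (F : Type*) {D : Type*} [CommRing A] [IsDomain A] [Field F] [Algebra A F]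
  [IsFractionRing A F]
  [Ring D] [Algebra F D] [Algebra A D] [IsScalarTower A F D] {O : Subalgebra A D}
  (hO : ∀ x : D, ∃ (s : A) (y : O), s ≠ 0 ∧ algebraMap A D s * x = y)
include hO

theorem Subalgebra.isBaseChange_val : IsBaseChange F O.val.toLinearMap :=
  have : IsLocalizedModule (nonZeroDivisors A) O.val.toLinearMap :=
    { map_units s := (Module.End.isUnit_iff _).mpr <| by
        convert (IsLocalization.map_units F s).smul_bijective (β := D) using 1
        funext x
        simp [algebraMap_smul]
      surj x := by
        obtain ⟨s, y, hs, h⟩ := hO x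
        exact ⟨(y, ⟨s, mem_nonZeroDivisors_of_ne_zero hs⟩), by simpa [Algebra.smul_def] using h⟩
      exists_of_eq h := ⟨1, by simpa using Subtype.ext h⟩ }
  IsLocalizedModule.isBaseChange (nonZeroDivisors A) F _

theorem Subalgebra.exists_algHom_extend {B : Type*} [Ring B] [Algebra F B] [Algebra A B]
    [IsScalarTower A F B] (δ : O →ₐ[A] B) : ∃ f : D →ₐ[F] B, ∀ y : O, f y = δ y := by
  have h := O.isBaseChange_val F hO
  let f := h.lift δ.toLinearMap
  have hf : ∀ y : O, f y = δ y := h.lift_eq δ.toLinearMap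
  have hmul_left : ∀ (y : O) (x : D), f (y * x) = f y * f x := fun y =>
    LinearMap.congr_fun <| h.algHom_ext (f ∘ₗ LinearMap.mulLeft F (y : D))
      (LinearMap.mulLeft F (f y) ∘ₗ f) fun y' => by simp [hf, ← MulMemClass.coe_mul]
  refine ⟨AlgHom.ofLinearMap f (by simpa using hf 1) fun x₁ x₂ => ?_, hf⟩
  exact LinearMap.congr_fun (h.algHom_ext (f ∘ₗ LinearMap.mulRight F x₂)
    (LinearMap.mulRight F (f x₂) ∘ₗ f) fun y => by simpa using hmul_left y x₂) x₁

end Orders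

theorem Subalgebra.exists_eq_smul_one_of_forall_commute {A F D K n : Type*} [CommRing A]
    [IsDomain A] [Field F] [Algebra A F] [IsFractionRing A F] [DivisionRing D] [Algebra F D]
    [Algebra A D] [IsScalarTower A F D] [Algebra.IsCentral F D] [Field K] [Algebra A K]
    [Fintype n] [DecidableEq n] {O : Subalgebra A D}
    (hO : ∀ x : D, ∃ (s : A) (y : O), s ≠ 0 ∧ algebraMap A D s * x = y)
    (hdim : Module.finrank F D = Fintype.card n ^ 2) (hK : Function.Injective (algebraMap A K))
    (δ : O →ₐ[A] Matrix n n K) {M : Matrix n n K} (hM : ∀ y, Commute M (δ y)) :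
    ∃ c : K, M = c • 1 := by
  let : Algebra F K := (IsFractionRing.lift hK).toAlgebra
  have : IsScalarTower A F K :=
    .of_algebraMap_eq fun a => (IsFractionRing.lift_algebraMap hK a).symm
  obtain ⟨f, hf⟩ := O.exists_algHom_extend F hO δ
  have hcomm :
      LinearMap.mulLeft F M ∘ₗ f.toLinearMap = LinearMap.mulRight F M ∘ₗ f.toLinearMap :=
    (O.isBaseChange_val F hO).algHom_ext _ _ fun y => by simpa [hf] using (hM y).eq
  exact Matrix.exists_eq_smul_one_of_forall_commute hdim f fun x => LinearMap.congr_fun hcomm x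

namespace DS

section Frobenius

variable {p e d : ℕ} [Fact p.Prime] {L : Type*} [Field L] [CharP L p]

lemma matFrob_smul_one (c : L) :
    matFrob p e d L (c • 1) = (c ^ p ^ e) • 1 := by
  rw [matFrob, RingHom.mapMatrix_apply, Matrix.smul_one_eq_diagonal,
    Matrix.diagonal_map (map_zero _), Matrix.smul_one_eq_diagonal, iterateFrobenius_def]

lemma matFrob_iterate_smul_one (m : ℕ) (c : L) :
    (⇑(matFrob p e d L))^[m] (c • 1) = (c ^ (p ^ e) ^ m) • 1 := by
  induction m generalizing c with
  | zero => simp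
  | succ m ih =>
    rw [Function.iterate_succ_apply, matFrob_smul_one, ih, ← pow_mul, ← pow_succ']

end Frobenius

section Morphisms

open SkewPoly

variable {p e d : ℕ} [Fact p.Prime] {A : Type*} [CommRing A] {D : Type*} [Ring D] [Algebra A D]
  {OD : Subalgebra A D} {L : Type*} [Field L] [CharP L p]
  {φ ψ χ : OD →+* MdTau p e d L} {u v : MdTau p e d L}

lemma IsMorphism.sub (hu : IsMorphism φ ψ u) (hv : IsMorphism φ ψ v) :
    IsMorphism φ ψ (u - v) :=
  fun b => by rw [sub_mul, mul_sub, hu b, hv b]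

lemma IsMorphism.mul (hu : IsMorphism ψ χ u) (hv : IsMorphism φ ψ v) :
    IsMorphism φ χ (u * v) :=
  fun b => by rw [mul_assoc, hv b, ← mul_assoc, hu b, mul_assoc]

/-- `∂ ∘ φ`, the action of `O_D` on `Lie(𝔾_a^d) = L^d`. -/
def tangentAction [Algebra A L] (φ : OD →+* MdTau p e d L)
    (hφ : ∀ a, coeff (φ (algebraMap A OD a)) 0 = algebraMap A L a • (1 : Matrix _ _ L)) :
    OD →ₐ[A] Matrix (Fin d) (Fin d) L :=
  { constantCoeff.comp φ with
    commutes' a := (hφ a).trans (by rw [algebraMap_smul, Algebra.algebraMap_eq_smul_one]) }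

section LieCondition

variable {γ : A →+* L}
  (hφ : ∀ a, coeff (φ (algebraMap A OD a)) 0 = γ a • (1 : Matrix (Fin d) (Fin d) L))
  (hψ : ∀ a, coeff (ψ (algebraMap A OD a)) 0 = γ a • (1 : Matrix (Fin d) (Fin d) L))
include hφ hψ

lemma IsMorphism.pow_smul_coeff_eq_smul_coeff (hu : IsMorphism φ ψ u) {n : ℕ}
    (hlow : ∀ i < n, coeff u i = 0) (a : A) :
    γ a ^ (p ^ e) ^ n • coeff u n = γ a • coeff u n := by
  have key := congrArg (coeff · n) (hu (algebraMap A OD a))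
  rwa [coeff_mul_of_forall_lt_left hlow, hφ, matFrob_iterate_smul_one, mul_smul_one,
    coeff_mul_of_forall_lt_right _ hlow, hψ, smul_one_mul] at key

lemma IsMorphism.eq_zero_of_constantCoeff_eq_zero [Infinite A] (he : 0 < e)
    (hγ : Function.Injective γ) (hu : IsMorphism φ ψ u) (h0 : constantCoeff u = 0) : u = 0 := by
  by_contra hne
  obtain ⟨n, hn, hlow⟩ := exists_coeff_ne_zero_forall_lt hne
  have hn0 : n ≠ 0 := by
    rintro rfl
    exact hn h0
  have hq : 1 < (p ^ e) ^ n :=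
    Nat.one_lt_pow hn0 (Nat.one_lt_pow he.ne' (Fact.out : p.Prime).one_lt)
  obtain ⟨a, ha⟩ := exists_pow_ne_self_of_injective hγ hq
  exact ha (smul_left_injective L hn (hu.pow_smul_coeff_eq_smul_coeff hφ hψ hlow a))

lemma IsMorphism.eq_of_constantCoeff_eq [Infinite A] (he : 0 < e) (hγ : Function.Injective γ)
    (hu : IsMorphism φ ψ u) (hv : IsMorphism φ ψ v) (h : constantCoeff u = constantCoeff v) :
    u = v :=
  sub_eq_zero.mp <| (hu.sub hv).eq_zero_of_constantCoeff_eq_zero hφ hψ he hγ <| by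
    rw [map_sub, h, sub_self]

end LieCondition

end Morphisms

section Endomorphisms

open SkewPoly

variable {p e d : ℕ} [Fact p.Prime] {A : Type*} [CommRing A] [IsDomain A]
  {F : Type*} [Field F] [Algebra A F] [IsFractionRing A F]
  {D : Type*} [DivisionRing D] [Algebra F D] [Algebra A D] [IsScalarTower A F D]
  [Algebra.IsCentral F D] {OD : Subalgebra A D} {L : Type*} [Field L] [CharP L p] [Algebra A L]

lemma IsMorphism.exists_constantCoeff_eq_smul_one (hdim : Module.finrank F D = d ^ 2)
    (hOD : ∀ x : D, ∃ (s : A) (y : OD), s ≠ 0 ∧ algebraMap A D s * x = y)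
    (hγ : Function.Injective (algebraMap A L)) {φ : OD →+* MdTau p e d L}
    (hφ : ∀ a, coeff (φ (algebraMap A OD a)) 0 = algebraMap A L a • (1 : Matrix _ _ L))
    {u : MdTau p e d L} (hu : IsMorphism φ φ u) : ∃ c : L, constantCoeff u = c • 1 :=
  Subalgebra.exists_eq_smul_one_of_forall_commute hOD (by simpa using hdim) hγ
    (tangentAction φ hφ) fun b => by
      have := congrArg constantCoeff (hu b)
      rwa [map_mul, map_mul] at this

end Endomorphisms

section Statement

open IsDedekindDomain

variable {p : ℕ} [Fact p.Prime] {e d : ℕ}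
variable {A : Type*} [CommRing A] [IsDomain A] [IsDedekindDomain A]
variable {F : Type*} [Field F] [Algebra A F] [IsFractionRing A F]
variable [Algebra (RatFunc (GaloisField p e)) F]
variable {D : Type*} [DivisionRing D] [Algebra F D] [Algebra A D] [IsScalarTower A F D]
variable (OD : Subalgebra A D)
variable {L : Type*} [Field L] [CharP L p] [Algebra A L]

theorem generic_char_hom_partial_injective_and_end_commutative
    (he : 0 < e)
    (hcentral : Subalgebra.center F D = ⊥)
    (hdim : Module.finrank F D = d ^ 2)
    (hOD : IsMaximalOrder A D OD)
    (hgen : Function.Injective (algebraMap A L))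
    (φ ψ : OD →+* MdTau p e d L)
    (hφ : IsDrinfeldStuhler OD (algebraMap A L) φ)
    (hψ : IsDrinfeldStuhler OD (algebraMap A L) ψ) :
    (∀ u v : MdTau p e d L, IsMorphism φ ψ u → IsMorphism φ ψ v →
        SkewPoly.coeff u 0 = SkewPoly.coeff v 0 → u = v) ∧
    (∀ u v : MdTau p e d L, IsMorphism φ φ u → IsMorphism φ φ v → u * v = v * u) ∧
    (∀ u : MdTau p e d L, IsMorphism φ φ u →
        ∃ c : L, SkewPoly.coeff u 0 = c • (1 : Matrix (Fin d) (Fin d) L)) := by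
  have : Infinite F := Infinite.of_injective _
    ((algebraMap (RatFunc (GaloisField p e)) F).injective.comp (RatFunc.algebraMap_injective _))
  have : Infinite A := infinite_of_isFractionRing A F
  have : Algebra.IsCentral F D := ⟨hcentral.le⟩
  have hscalar : ∀ u, IsMorphism φ φ u → ∃ c : L, SkewPoly.constantCoeff u = c • 1 :=
    fun u hu => hu.exists_constantCoeff_eq_smul_one hdim hOD.1.2 hgen hφ.lie
  refine ⟨fun u v hu hv => hu.eq_of_constantCoeff_eq hφ.lie hψ.lie he hgen hv,
    fun u v hu hv => ?_, hscalar⟩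
  obtain ⟨c, hc⟩ := hscalar u hu
  refine (hu.mul hv).eq_of_constantCoeff_eq hφ.lie hφ.lie he hgen (hv.mul hu) ?_
  rw [map_mul, map_mul, hc, smul_one_mul, mul_smul_one]

end Statement

end DS
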